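/- For every h ∈ (−1/4, 0), the cubic moment integral J₃(h) = 2∫_{x₁(h)}^{x₂(h)} (2h + x² − x⁴/2)^{3/2} dx (which equals ∮_{γ(h)} y³ dx) satisfies J₃(h) = (12h/7)·I₀(h) + (3/7)·I₂(h). -/

import Mathlib

open MeasureTheory

/-- Left endpoint `x₁(h) = √(1 − √(1+4h))` of the interior oval of the Duffing Hamiltonian
`H(x,y) = y²/2 − x²/2 + x⁴/4`. -/
noncomputable def x1 (h : ℝ) : ℝ := Real.sqrt (1 - Real.sqrt (1 + 4*h))

/-- Right endpoint `x₂(h) = √(1 + √(1+4h))` of the interior oval. -/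
noncomputable def x2 (h : ℝ) : ℝ := Real.sqrt (1 + Real.sqrt (1 + 4*h))

/-- The interior Abelian integrals `I_i(h) = 2∫_{x₁(h)}^{x₂(h)} xⁱ √(2h + x² − x⁴/2) dx`. -/
noncomputable def Iint (i : ℕ) (h : ℝ) : ℝ :=
  2 * ∫ x in x1 h..x2 h, x ^ i * Real.sqrt (2*h + x^2 - x^4/2)

/-- The cubic moment integral `J₃(h) = 2∫_{x₁(h)}^{x₂(h)} (2h + x² − x⁴/2)^{3/2} dx`,
which equals `∮_{γ(h)} y³ dx`. -/
noncomputable def J3 (h : ℝ) : ℝ :=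
  2 * ∫ x in x1 h..x2 h, (2*h + x^2 - x^4/2) ^ ((3:ℝ)/2)

lemma key32 (t : ℝ) : t ^ ((3:ℝ)/2) = t * Real.sqrt t := by
  rcases lt_trichotomy t 0 with ht | rfl | ht
  · rw [Real.sqrt_eq_zero_of_nonpos ht.le, Real.rpow_def_of_neg ht, mul_zero]
    have : Real.cos ((3:ℝ)/2 * Real.pi) = 0 := by
      have : (3:ℝ)/2 * Real.pi = Real.pi/2 + Real.pi := by ring
      rw [this, Real.cos_add_pi, Real.cos_pi_div_two, neg_zero]
    rw [this, mul_zero]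
  · simp
  · rw [show (3:ℝ)/2 = 1 + 1/2 by norm_num, Real.rpow_add ht, Real.rpow_one,
      Real.sqrt_eq_rpow]

theorem J3_reduction_interior (h : ℝ) (hh : h ∈ Set.Ioo (-(1:ℝ)/4) 0) :
    J3 h = (12*h/7) * Iint 0 h + (3/7) * Iint 2 h := by
  obtain ⟨hl, hr⟩ := hh
  set a := x1 h with ha
  set b := x2 h with hb
  set q : ℝ → ℝ := fun x => 2*h + x^2 - x^4/2 with hqdef
  have hs0 : (0:ℝ) ≤ 1 + 4*h := by linarith
  have hssq : Real.sqrt (1+4*h) ^ 2 = 1+4*h := Real.sq_sqrt hs0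
  have hs1 : Real.sqrt (1+4*h) ≤ 1 := by
    nlinarith [Real.sqrt_nonneg (1+4*h)]
  have hasq : a^2 = 1 - Real.sqrt (1+4*h) := Real.sq_sqrt (by linarith)
  have hbsq : b^2 = 1 + Real.sqrt (1+4*h) :=
    Real.sq_sqrt (by nlinarith [Real.sqrt_nonneg (1+4*h)])
  have hqa : q a = 0 := by
    show 2*h + a^2 - a^4/2 = 0
    have h4 : a^4 = (a^2)^2 := by ring
    rw [h4, hasq]; nlinarith
  have hqb : q b = 0 := by
    show 2*h + b^2 - b^4/2 = 0
    have h4 : b^4 = (b^2)^2 := by ring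
    rw [h4, hbsq]; nlinarith
  -- continuity
  have hqc : Continuous q := by fun_prop
  have hsc : Continuous (fun x => Real.sqrt (q x)) := Real.continuous_sqrt.comp hqc
  have hintA : IntervalIntegrable (fun x => Real.sqrt (q x)) volume a b :=
    hsc.intervalIntegrable a b
  have hintB : IntervalIntegrable (fun x => x^2 * Real.sqrt (q x)) volume a b :=
    ((continuous_pow 2).mul hsc).intervalIntegrable a b
  have hintC : IntervalIntegrable (fun x => x^4 * Real.sqrt (q x)) volume a b :=
    ((continuous_pow 4).mul hsc).intervalIntegrable a b
  -- derivative of q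
  have hq' : ∀ x : ℝ, HasDerivAt q (2*x - 2*x^3) x := by
    intro x
    have h1 : HasDerivAt q ((0 + 2*x^1) - (4:ℕ)*x^3/2) x := by
      exact ((hasDerivAt_const x (2*h)).add (hasDerivAt_pow 2 x)).sub
        ((hasDerivAt_pow 4 x).div_const 2)
    convert h1 using 1; push_cast; ring
  -- derivative of x * q x ^ (3/2)
  have hF : ∀ x : ℝ, HasDerivAt (fun x => x * q x ^ ((3:ℝ)/2))
      (q x * Real.sqrt (q x) + (3*(x^2 * Real.sqrt (q x)) - 3*(x^4 * Real.sqrt (q x)))) x := by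
    intro x
    have hpow : HasDerivAt (fun x => q x ^ ((3:ℝ)/2))
        ((3:ℝ)/2 * q x ^ ((3:ℝ)/2 - 1) * (2*x - 2*x^3)) x :=
      (Real.hasDerivAt_rpow_const (p := (3:ℝ)/2) (Or.inr (by norm_num))).comp x (hq' x)
    have hmul := (hasDerivAt_id x).mul hpow
    convert hmul using 1
    · rfl
    · rfl
    · rfl
    have e1 : q x ^ ((3:ℝ)/2 - 1) = Real.sqrt (q x) := by
      rw [show (3:ℝ)/2 - 1 = 1/2 by norm_num, Real.sqrt_eq_rpow]
    have e2 : q x ^ ((3:ℝ)/2) = q x * Real.sqrt (q x) := key32 _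
    rw [e1, e2, id]
    ring
  -- integrability of the derivative
  have hintF : IntervalIntegrable (fun x => q x * Real.sqrt (q x) +
      (3*(x^2 * Real.sqrt (q x)) - 3*(x^4 * Real.sqrt (q x)))) volume a b := by
    apply Continuous.intervalIntegrable
    fun_prop
  -- integration by parts / FTC
  have hFTC : (∫ x in a..b, (q x * Real.sqrt (q x) +
      (3*(x^2 * Real.sqrt (q x)) - 3*(x^4 * Real.sqrt (q x))))) =
      b * q b ^ ((3:ℝ)/2) - a * q a ^ ((3:ℝ)/2) :=
    intervalIntegral.integral_eq_sub_of_hasDerivAt (fun x _ => hF x) hintF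
  rw [hqa, hqb, Real.zero_rpow (by norm_num), mul_zero, mul_zero, sub_zero] at hFTC
  -- split integrals
  set A := ∫ x in a..b, Real.sqrt (q x) with hA
  set B := ∫ x in a..b, x^2 * Real.sqrt (q x) with hB
  set C := ∫ x in a..b, x^4 * Real.sqrt (q x) with hC
  have hintJ : IntervalIntegrable (fun x => q x * Real.sqrt (q x)) volume a b :=
    (hqc.mul hsc).intervalIntegrable a b
  have hsplit1 : (∫ x in a..b, (q x * Real.sqrt (q x) +
      (3*(x^2 * Real.sqrt (q x)) - 3*(x^4 * Real.sqrt (q x))))) =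
      (∫ x in a..b, q x * Real.sqrt (q x)) + (3*B - 3*C) := by
    rw [intervalIntegral.integral_add hintJ ((hintB.const_mul 3).sub (hintC.const_mul 3)),
      intervalIntegral.integral_sub (hintB.const_mul 3) (hintC.const_mul 3),
      intervalIntegral.integral_const_mul, intervalIntegral.integral_const_mul]
  -- pointwise expansion of q*sqrt q
  have hsplit2 : (∫ x in a..b, q x * Real.sqrt (q x)) = 2*h*A + B - C/2 := by
    have : ∀ x : ℝ, q x * Real.sqrt (q x) =
        2*h*Real.sqrt (q x) + x^2*Real.sqrt (q x) - (x^4*Real.sqrt (q x))/2 := by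
      intro x; show (2*h + x^2 - x^4/2) * _ = _; ring
    rw [intervalIntegral.integral_congr (fun x _ => this x)]
    rw [intervalIntegral.integral_sub ((hintA.const_mul (2*h)).add hintB) (hintC.div_const 2),
      intervalIntegral.integral_add (hintA.const_mul (2*h)) hintB,
      intervalIntegral.integral_const_mul, intervalIntegral.integral_div]
  -- rewrite J3 and Iint
  have hJ3 : J3 h = 2 * ∫ x in a..b, q x * Real.sqrt (q x) := by
    rw [J3]
    congr 1
    apply intervalIntegral.integral_congr
    intro x _
    exact key32 (q x)
  have hI0 : Iint 0 h = 2 * A := by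
    rw [Iint, hA]
    congr 1
    apply intervalIntegral.integral_congr
    intro x _
    simp
    rfl
  have hI2 : Iint 2 h = 2 * B := by rfl
  rw [hJ3, hI0, hI2, hsplit2]
  rw [hsplit1, hsplit2] at hFTC
  linarith
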